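/- arXiv:0705.4060 — 3 statements merged into one kernel-verified Lean document; each statement's English description precedes it below -/
import Mathlib

section
/- With notation as above, for every continuous f : X → ℂ and every n ∈ ℕ, (S*)^n ∘ M_f ∘ S^n = M_{ℒ_p^n(f)} as operators on L²(μ), where M_f is multiplication by f. -/
/-!
Since `ℒ_p 1 = 1`, a measure fixed by `ℒ_p^*` is shift-invariant. The identity
`ℒ_p^n (g · h ∘ Tⁿ) = ℒ_p^n g · h` then gives `∫ g · h ∘ Tⁿ dμ = ∫ ℒ_p^n g · h dμ` for continuous
`g` and `h`, and both sides are `L¹`-Lipschitz in `h`, so by density of continuous functions in `L¹`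
it holds for every integrable `h`. Taking `h = conj ξ · η` for `ξ, η ∈ L²(μ)` is exactly
`⟪Sⁿ ξ, M_f Sⁿ η⟫ = ⟪ξ, M_{ℒ_p^n f} η⟫`.
-/

open MeasureTheory Finset

/-- The full shift space `{1,…,k}^ℕ`, modeled as `ℕ → Fin k`. -/
abbrev ShiftSpace (k : ℕ) := ℕ → Fin k

/-- The left shift `T`. -/
def shiftT {k : ℕ} (x : ShiftSpace k) : ShiftSpace k := fun n => x (n + 1)

/-- Prepending a symbol: the `k` preimages of `x` under the shift are `consS i x`. -/
def consS {k : ℕ} (i : Fin k) (x : ShiftSpace k) : ShiftSpace k :=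
  fun n => Nat.casesOn n i x

/-- The Ruelle operator `ℒ_p f (x) = ∑_{T z = x} p z · f z` on complex functions. -/
noncomputable def ruelleOp {k : ℕ} (p : ShiftSpace k → ℝ) (f : ShiftSpace k → ℂ) :
    ShiftSpace k → ℂ :=
  fun x => ∑ i : Fin k, (p (consS i x) : ℂ) * f (consS i x)

/-- The Ruelle operator on real functions. -/
noncomputable def ruelleOpR {k : ℕ} (p : ShiftSpace k → ℝ) (f : ShiftSpace k → ℝ) :
    ShiftSpace k → ℝ :=
  fun x => ∑ i : Fin k, p (consS i x) * f (consS i x)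

/-- Hölder continuity with respect to the standard ultrametric on the shift space:
`|f x - f y| ≤ C · 2^{-α n}` whenever `x` and `y` agree on the first `n` coordinates. -/
def HolderSeq {k : ℕ} (f : ShiftSpace k → ℝ) : Prop :=
  ∃ C α : ℝ, 0 < α ∧ ∀ x y : ShiftSpace k, ∀ n : ℕ,
    (∀ m < n, x m = y m) → |f x - f y| ≤ C * (2 : ℝ) ^ (-(α * n))

/-- `λ^{-[n]}(x) = ∏_{i<n} p(T^i x)`. -/
noncomputable def lamInv {k : ℕ} (p : ShiftSpace k → ℝ) (n : ℕ) (x : ShiftSpace k) : ℝ :=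
  ∏ i ∈ Finset.range n, p (shiftT^[i] x)

/-- `H^{β[n]}(x) = ∏_{i<n} H(T^i x)^β`. -/
noncomputable def hPow {k : ℕ} (H : ShiftSpace k → ℝ) (β : ℝ) (n : ℕ)
    (x : ShiftSpace k) : ℝ :=
  ∏ i ∈ Finset.range n, H (shiftT^[i] x) ^ β

/-- `Λ_n = H^{-β[n]} · λ^{[n]}`. -/
noncomputable def lambdaN {k : ℕ} (p H : ShiftSpace k → ℝ) (β : ℝ) (n : ℕ)
    (x : ShiftSpace k) : ℝ :=
  hPow H (-β) n x * (lamInv p n x)⁻¹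

/-- The Ruelle operator `ℒ_{-β log H}` on real functions. -/
noncomputable def ruelleH {k : ℕ} (H : ShiftSpace k → ℝ) (β : ℝ) (f : ShiftSpace k → ℝ) :
    ShiftSpace k → ℝ :=
  fun x => ∑ i : Fin k, H (consS i x) ^ (-β) * f (consS i x)

open scoped BoundedContinuousFunction ENNReal

section Approximation

variable {X 𝕜 : Type*} [TopologicalSpace X] [MeasurableSpace X] [RCLike 𝕜] {μ : Measure X}

lemma norm_integral_mul_sub_integral_mul_le [OpensMeasurableSpace X] (a : X →ᵇ 𝕜)
    {φ ψ : X → 𝕜} (hφ : Integrable φ μ) (hψ : Integrable ψ μ) :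
    ‖∫ x, a x * φ x ∂μ - ∫ x, a x * ψ x ∂μ‖ ≤ ‖a‖ * ∫ x, ‖φ x - ψ x‖ ∂μ := by
  have hbound : ∀ x, ‖a x‖ ≤ ‖a‖ := a.norm_coe_le_norm
  have ha : AEStronglyMeasurable a μ := a.continuous.aestronglyMeasurable
  rw [← integral_sub (hφ.bdd_mul ha (.of_forall hbound)) (hψ.bdd_mul ha (.of_forall hbound)),
    ← integral_const_mul]
  refine norm_integral_le_of_norm_le ((hφ.sub hψ).norm.const_mul _) (.of_forall fun x => ?_)
  rw [← mul_sub, norm_mul]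
  exact mul_le_mul_of_nonneg_right (hbound x) (norm_nonneg _)

variable [NormalSpace X] [BorelSpace X] [μ.WeaklyRegular]

theorem integral_mul_comp_eq_of_forall_boundedContinuous {T : X → X}
    (hT : MeasurePreserving T μ μ) (a b : X →ᵇ 𝕜)
    (h : ∀ ψ : X →ᵇ 𝕜, ∫ x, a x * ψ (T x) ∂μ = ∫ x, b x * ψ x ∂μ)
    {φ : X → 𝕜} (hφ : Integrable φ μ) :
    ∫ x, a x * φ (T x) ∂μ = ∫ x, b x * φ x ∂μ := by
  refine eq_of_forall_dist_le fun ε hε => ?_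
  have hC : 0 < ‖a‖ + ‖b‖ + 1 := by positivity
  obtain ⟨ψ, hψφ, hψ⟩ := hφ.exists_boundedContinuous_integral_sub_le (div_pos hε hC)
  have hdist_comp : ∫ x, ‖φ (T x) - ψ (T x)‖ ∂μ = ∫ x, ‖φ x - ψ x‖ ∂μ := by
    have := integral_map (f := fun y => ‖φ y - ψ y‖) hT.aemeasurable
      (by rw [hT.map_eq]; exact (hφ.sub hψ).aestronglyMeasurable.norm)
    rwa [hT.map_eq, eq_comm] at this
  have hdist : ∫ x, ‖ψ x - φ x‖ ∂μ = ∫ x, ‖φ x - ψ x‖ ∂μ := by simp_rw [norm_sub_rev]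
  have hL1 : 0 ≤ ∫ x, ‖φ x - ψ x‖ ∂μ := integral_nonneg fun _ => norm_nonneg _
  calc dist (∫ x, a x * φ (T x) ∂μ) (∫ x, b x * φ x ∂μ)
      = ‖(∫ x, a x * φ (T x) ∂μ - ∫ x, a x * ψ (T x) ∂μ)
          + (∫ x, b x * ψ x ∂μ - ∫ x, b x * φ x ∂μ)‖ := by
        rw [dist_eq_norm, h ψ, sub_add_sub_cancel]
    _ ≤ ‖a‖ * ∫ x, ‖φ x - ψ x‖ ∂μ + ‖b‖ * ∫ x, ‖φ x - ψ x‖ ∂μ := by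
        refine (norm_add_le _ _).trans (add_le_add ?_ ?_)
        · rw [← hdist_comp]
          exact norm_integral_mul_sub_integral_mul_le a
            (hT.integrable_comp_of_integrable hφ) (hT.integrable_comp_of_integrable hψ)
        · rw [← hdist]
          exact norm_integral_mul_sub_integral_mul_le b hψ hφ
    _ ≤ (‖a‖ + ‖b‖ + 1) * (ε / (‖a‖ + ‖b‖ + 1)) := by nlinarith [norm_nonneg a, norm_nonneg b]
    _ = ε := mul_div_cancel₀ _ hC.ne'

end Approximation

theorem iterate_apply_ae_eq_comp_iterate {α E : Type*} [MeasurableSpace α] [NormedAddCommGroup E]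
    {p : ℝ≥0∞} {μ : Measure α} {T : α → α} (hT : Measure.QuasiMeasurePreserving T μ μ)
    (S : Lp E p μ → Lp E p μ) (hS : ∀ η : Lp E p μ, ∀ᵐ x ∂μ, S η x = η (T x)) (n : ℕ)
    (η : Lp E p μ) : ∀ᵐ x ∂μ, S^[n] η x = η (T^[n] x) := by
  induction n with
  | zero => exact .of_forall fun _ => rfl
  | succ n ih =>
    filter_upwards [hS (S^[n] η), hT.ae ih] with x hSx hx
    rw [Function.iterate_succ_apply', hSx, hx, ← Function.iterate_succ_apply]

section RuelleOperator

variable {k : ℕ}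

@[simp]
lemma shiftT_consS (i : Fin k) (x : ShiftSpace k) : shiftT (consS i x) = x := rfl

lemma continuous_shiftT : Continuous (shiftT (k := k)) :=
  continuous_pi fun n => continuous_apply (n + 1)

lemma continuous_consS (i : Fin k) : Continuous (consS i) :=
  continuous_pi fun n => by
    cases n with
    | zero => exact continuous_const
    | succ m => exact continuous_apply m

variable (p : ShiftSpace k → ℝ)

lemma continuous_ruelleOp (hp : Continuous p) {f : ShiftSpace k → ℂ} (hf : Continuous f) :
    Continuous (ruelleOp p f) :=
  continuous_finsetSum _ fun i _ =>
    (Complex.continuous_ofReal.comp (hp.comp (continuous_consS i))).mul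
      (hf.comp (continuous_consS i))

lemma continuous_ruelleOp_iterate (hp : Continuous p) {f : ShiftSpace k → ℂ} (hf : Continuous f)
    (n : ℕ) : Continuous ((ruelleOp p)^[n] f) := by
  induction n with
  | zero => exact hf
  | succ n ih =>
    rw [Function.iterate_succ_apply']
    exact continuous_ruelleOp p hp ih

lemma ruelleOp_one (hp_norm : ∀ x : ShiftSpace k, ∑ i : Fin k, p (consS i x) = 1) :
    ruelleOp p 1 = 1 := by
  funext x
  simp [ruelleOp, ← Complex.ofReal_sum, hp_norm x]

lemma ruelleOp_mul_comp_shiftT (g h : ShiftSpace k → ℂ) :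
    ruelleOp p (fun x => g x * h (shiftT x)) = fun x => ruelleOp p g x * h x := by
  funext x
  simp only [ruelleOp, shiftT_consS, Finset.sum_mul, mul_assoc]

lemma ruelleOp_iterate_mul_comp_iterate (n : ℕ) (g h : ShiftSpace k → ℂ) :
    (ruelleOp p)^[n] (fun x => g x * h (shiftT^[n] x)) =
      fun x => (ruelleOp p)^[n] g x * h x := by
  induction n generalizing h with
  | zero => rfl
  | succ n ih =>
    simp only [Function.iterate_succ_apply' shiftT, Function.iterate_succ_apply' (ruelleOp p)]
    rw [ih fun y => h (shiftT y)]
    exact ruelleOp_mul_comp_shiftT p _ h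

variable (μ : Measure (ShiftSpace k))

lemma integral_ruelleOp_iterate (hp : Continuous p)
    (hμ : ∀ f : ShiftSpace k → ℂ, Continuous f → ∫ x, ruelleOp p f x ∂μ = ∫ x, f x ∂μ)
    {g : ShiftSpace k → ℂ} (hg : Continuous g) (n : ℕ) :
    ∫ x, (ruelleOp p)^[n] g x ∂μ = ∫ x, g x ∂μ := by
  induction n with
  | zero => rfl
  | succ n ih =>
    rw [Function.iterate_succ_apply', hμ _ (continuous_ruelleOp_iterate p hp hg n), ih]

lemma integral_mul_comp_iterate_of_continuous (hp : Continuous p)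
    (hμ : ∀ f : ShiftSpace k → ℂ, Continuous f → ∫ x, ruelleOp p f x ∂μ = ∫ x, f x ∂μ)
    {g φ : ShiftSpace k → ℂ} (hg : Continuous g) (hφ : Continuous φ) (n : ℕ) :
    ∫ x, g x * φ (shiftT^[n] x) ∂μ = ∫ x, (ruelleOp p)^[n] g x * φ x ∂μ := by
  rw [← integral_ruelleOp_iterate p μ hp hμ (g := fun x => g x * φ (shiftT^[n] x))
    (hg.mul (hφ.comp (continuous_shiftT.iterate n))),
    ruelleOp_iterate_mul_comp_iterate]

lemma measurePreserving_shiftT [IsFiniteMeasure μ] (hp : Continuous p)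
    (hp_norm : ∀ x : ShiftSpace k, ∑ i : Fin k, p (consS i x) = 1)
    (hμ : ∀ f : ShiftSpace k → ℂ, Continuous f → ∫ x, ruelleOp p f x ∂μ = ∫ x, f x ∂μ) :
    MeasurePreserving shiftT μ μ := by
  refine ⟨continuous_shiftT.measurable, ext_of_forall_integral_eq_of_IsFiniteMeasure fun f => ?_⟩
  have hf : Continuous fun x => (f x : ℂ) := Complex.continuous_ofReal.comp f.continuous
  have := integral_mul_comp_iterate_of_continuous p μ hp hμ (g := 1) continuous_const hf 1
  simp only [Function.iterate_one, ruelleOp_one p hp_norm, Pi.one_apply, one_mul,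
    integral_complex_ofReal, Complex.ofReal_inj] at this
  rw [integral_map continuous_shiftT.aemeasurable f.continuous.aestronglyMeasurable, this]

theorem integral_mul_comp_iterate [IsFiniteMeasure μ] (hp : Continuous p)
    (hp_norm : ∀ x : ShiftSpace k, ∑ i : Fin k, p (consS i x) = 1)
    (hμ : ∀ f : ShiftSpace k → ℂ, Continuous f → ∫ x, ruelleOp p f x ∂μ = ∫ x, f x ∂μ)
    {g : ShiftSpace k → ℂ} (hg : Continuous g) (n : ℕ) {φ : ShiftSpace k → ℂ}
    (hφ : Integrable φ μ) :
    ∫ x, g x * φ (shiftT^[n] x) ∂μ = ∫ x, (ruelleOp p)^[n] g x * φ x ∂μ :=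
  integral_mul_comp_eq_of_forall_boundedContinuous
    ((measurePreserving_shiftT p μ hp hp_norm hμ).iterate n)
    (.mkOfCompact ⟨g, hg⟩) (.mkOfCompact ⟨_, continuous_ruelleOp_iterate p hp hg n⟩)
    (fun ψ => integral_mul_comp_iterate_of_continuous p μ hp hμ hg ψ.continuous n) hφ

end RuelleOperator

theorem adjoint_pow_mul_mult_mul_pow_general {k : ℕ}
    (p : ShiftSpace k → ℝ) (hp_cont : Continuous p)
    (hp_norm : ∀ x : ShiftSpace k, ∑ i : Fin k, p (consS i x) = 1)
    (μ : Measure (ShiftSpace k)) [IsProbabilityMeasure μ]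
    (hμ : ∀ f : ShiftSpace k → ℂ, Continuous f →
      ∫ x, ruelleOp p f x ∂μ = ∫ x, f x ∂μ)
    (S : Lp ℂ 2 μ →L[ℂ] Lp ℂ 2 μ)
    (hS : ∀ η : Lp ℂ 2 μ, ∀ᵐ x ∂μ, S η x = η (shiftT x))
    (f : ShiftSpace k → ℂ) (hf : Continuous f) (n : ℕ)
    (Mf : Lp ℂ 2 μ →L[ℂ] Lp ℂ 2 μ)
    (hMf : ∀ η : Lp ℂ 2 μ, ∀ᵐ x ∂μ, Mf η x = f x * η x)
    (MLf : Lp ℂ 2 μ →L[ℂ] Lp ℂ 2 μ)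
    (hMLf : ∀ η : Lp ℂ 2 μ, ∀ᵐ x ∂μ, MLf η x = (ruelleOp p)^[n] f x * η x) :
    ((ContinuousLinearMap.adjoint S) ^ n) ∘L Mf ∘L (S ^ n) = MLf := by
  have hT := measurePreserving_shiftT p μ hp_cont hp_norm hμ
  have hSn (η : Lp ℂ 2 μ) : ∀ᵐ x ∂μ, (S ^ n) η x = η (shiftT^[n] x) := by
    rw [FunLike.coe_pow_eq_iterate]
    exact iterate_apply_ae_eq_comp_iterate hT.quasiMeasurePreserving S hS n η
  refine ContinuousLinearMap.ext fun η => ext_inner_left ℂ fun ξ => ?_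
  rw [← ContinuousLinearMap.star_eq_adjoint, ← star_pow, ContinuousLinearMap.star_eq_adjoint,
    ContinuousLinearMap.comp_apply, ContinuousLinearMap.comp_apply,
    ContinuousLinearMap.adjoint_inner_right, L2.inner_def, L2.inner_def]
  have hξη : Integrable (fun x => starRingEnd ℂ (ξ x) * η x) μ := by
    simpa only [RCLike.inner_apply, mul_comm] using L2.integrable_inner (𝕜 := ℂ) ξ η
  calc ∫ x, inner ℂ ((S ^ n) ξ x) (Mf ((S ^ n) η) x) ∂μ
      = ∫ x, f x * (starRingEnd ℂ (ξ (shiftT^[n] x)) * η (shiftT^[n] x)) ∂μ := by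
        refine integral_congr_ae ?_
        filter_upwards [hSn ξ, hSn η, hMf ((S ^ n) η)] with x hξ hη hM
        rw [RCLike.inner_apply, hξ, hM, hη]
        ring
    _ = ∫ x, (ruelleOp p)^[n] f x * (starRingEnd ℂ (ξ x) * η x) ∂μ :=
        integral_mul_comp_iterate p μ hp_cont hp_norm hμ hf n hξη
    _ = ∫ x, inner ℂ (ξ x) (MLf η x) ∂μ := by
        refine integral_congr_ae ?_
        filter_upwards [hMLf η] with x hM
        rw [RCLike.inner_apply, hM]
        ring

theorem adjoint_pow_mul_mult_mul_pow {k : ℕ} [NeZero k]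
    (p : ShiftSpace k → ℝ) (hp_cont : Continuous p) (hp_pos : ∀ x, 0 < p x)
    (hp_norm : ∀ x : ShiftSpace k, ∑ i : Fin k, p (consS i x) = 1)
    (μ : Measure (ShiftSpace k)) [IsProbabilityMeasure μ]
    (hμ : ∀ f : ShiftSpace k → ℂ, Continuous f →
      ∫ x, ruelleOp p f x ∂μ = ∫ x, f x ∂μ)
    (S : Lp ℂ 2 μ →L[ℂ] Lp ℂ 2 μ)
    (hS : ∀ η : Lp ℂ 2 μ, ∀ᵐ x ∂μ, S η x = η (shiftT x))
    (f : ShiftSpace k → ℂ) (hf : Continuous f) (n : ℕ)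
    (Mf : Lp ℂ 2 μ →L[ℂ] Lp ℂ 2 μ)
    (hMf : ∀ η : Lp ℂ 2 μ, ∀ᵐ x ∂μ, Mf η x = f x * η x)
    (MLf : Lp ℂ 2 μ →L[ℂ] Lp ℂ 2 μ)
    (hMLf : ∀ η : Lp ℂ 2 μ, ∀ᵐ x ∂μ, MLf η x = (ruelleOp p)^[n] f x * η x) :
    ((ContinuousLinearMap.adjoint S) ^ n) ∘L Mf ∘L (S ^ n) = MLf :=
  adjoint_pow_mul_mult_mul_pow_general p hp_cont hp_norm μ hμ S hS f hf n Mf hMf MLf hMLf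
end

section
/- Assume the uniform convergence λ_β^{-n} ℒ_β^n(f) → h_β · ∫ f dν_β with h_β continuous, positive, bounded below by c > 0. If ν is a probability satisfying ∫ f dν = ∫ ((ℒ_β^n f) ∘ T^n) Λ_n dν for all continuous f and all n, then the sequence ∫ λ_β^n Λ_n dν is bounded above by (∫ h_β dν)/c. -/
open MeasureTheory Finset

/-!
Applying the transfer identity to the eigenfunction `h_β` gives
`∫ h_β dν = ∫ λ_β^n (h_β ∘ T^n) Λ_n dν`, and `h_β ≥ c` bounds the right-hand side below by
`c ∫ λ_β^n Λ_n dν`.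
-/

theorem lambdaN_nonneg {k : ℕ} {p H : ShiftSpace k → ℝ} (hp : ∀ x, 0 ≤ p x)
    (hH : ∀ x, 0 ≤ H x) (β : ℝ) (n : ℕ) (x : ShiftSpace k) : 0 ≤ lambdaN p H β n x :=
  mul_nonneg (prod_nonneg fun _ _ => Real.rpow_nonneg (hH _) _)
    (inv_nonneg.mpr (prod_nonneg fun _ _ => hp _))

theorem MeasureTheory.mul_integral_le_integral_mul_of_le {α : Type*} [MeasurableSpace α]
    {μ : Measure α} {w g : α → ℝ} {c : ℝ} (hc : 0 ≤ c) (hw : ∀ x, 0 ≤ w x)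
    (hg : ∀ x, c ≤ g x) (hgw : Integrable (fun x => g x * w x) μ) :
    c * ∫ x, w x ∂μ ≤ ∫ x, g x * w x ∂μ := by
  rw [← integral_const_mul]
  exact integral_mono_of_nonneg (ae_of_all _ fun x => mul_nonneg hc (hw x)) hgw
    (ae_of_all _ fun x => mul_le_mul_of_nonneg_right (hg x) (hw x))

theorem integral_lambdaN_bounded_general {k : ℕ}
    (p : ShiftSpace k → ℝ) (hp_pos : ∀ x, 0 < p x)
    (H : ShiftSpace k → ℝ) (hH_pos : ∀ x, 0 < H x)
    (β lamβ : ℝ) (hlam : 0 < lamβ)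
    (hβf : ShiftSpace k → ℝ) (hβf_cont : Continuous hβf)
    (c : ℝ) (hc : 0 < c) (hβf_lb : ∀ x, c ≤ hβf x)
    (hβf_eig : ∀ n : ℕ, ∀ x, (ruelleH H β)^[n] hβf x = lamβ ^ n * hβf x)
    (ν : Measure (ShiftSpace k)) [IsProbabilityMeasure ν]
    (hν : ∀ f : ShiftSpace k → ℝ, Continuous f → ∀ n : ℕ,
      ∫ x, f x ∂ν =
        ∫ x, ((ruelleH H β)^[n] f (shiftT^[n] x)) * lambdaN p H β n x ∂ν) :
    ∀ n : ℕ, ∫ x, lamβ ^ n * lambdaN p H β n x ∂ν ≤ (∫ x, hβf x ∂ν) / c := by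
  intro n
  have hΛ : ∀ x, 0 ≤ lamβ ^ n * lambdaN p H β n x := fun x =>
    mul_nonneg (pow_nonneg hlam.le n) (lambdaN_nonneg (fun x => (hp_pos x).le)
      (fun x => (hH_pos x).le) β n x)
  have htransfer : ∫ x, hβf x ∂ν =
      ∫ x, hβf (shiftT^[n] x) * (lamβ ^ n * lambdaN p H β n x) ∂ν := by
    rw [hν hβf hβf_cont n]
    simp only [hβf_eig, mul_left_comm, mul_assoc]
  have hc_le : c ≤ ∫ x, hβf x ∂ν := by
    simpa using integral_mono (integrable_const c)
      (hβf_cont.integrable_of_hasCompactSupport (μ := ν) (.of_compactSpace _)) hβf_lb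
  -- The transferred integrand is integrable because its integral is `∫ h_β dν ≠ 0`.
  have hint := Integrable.of_integral_ne_zero (htransfer ▸ (hc.trans_le hc_le).ne')
  rw [le_div_iff₀ hc, mul_comm, htransfer]
  exact mul_integral_le_integral_mul_of_le hc.le hΛ (fun x => hβf_lb _) hint

theorem integral_lambdaN_bounded {k : ℕ} [NeZero k]
    (p : ShiftSpace k → ℝ) (hp_cont : Continuous p) (hp_pos : ∀ x, 0 < p x)
    (hp_norm : ∀ x : ShiftSpace k, ∑ i : Fin k, p (consS i x) = 1)
    (hp_hold : HolderSeq fun x => Real.log (p x))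
    (H : ShiftSpace k → ℝ) (hH_cont : Continuous H) (hH_pos : ∀ x, 0 < H x)
    (hH_hold : HolderSeq fun x => Real.log (H x))
    (β lamβ : ℝ) (hlam : 0 < lamβ)
    (νβ : Measure (ShiftSpace k)) [IsProbabilityMeasure νβ]
    (hβf : ShiftSpace k → ℝ) (hβf_cont : Continuous hβf)
    (c : ℝ) (hc : 0 < c) (hβf_lb : ∀ x, c ≤ hβf x)
    (hβf_eig : ∀ n : ℕ, ∀ x, (ruelleH H β)^[n] hβf x = lamβ ^ n * hβf x)
    (hRPF : ∀ f : ShiftSpace k → ℝ, Continuous f → ∀ ε > (0 : ℝ), ∃ N : ℕ,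
      ∀ n ≥ N, ∀ x : ShiftSpace k,
        |(ruelleH H β)^[n] f x / lamβ ^ n - hβf x * ∫ y, f y ∂νβ| ≤ ε)
    (ν : Measure (ShiftSpace k)) [IsProbabilityMeasure ν]
    (hν : ∀ f : ShiftSpace k → ℝ, Continuous f → ∀ n : ℕ,
      ∫ x, f x ∂ν =
        ∫ x, ((ruelleH H β)^[n] f (shiftT^[n] x)) * lambdaN p H β n x ∂ν) :
    ∀ n : ℕ, ∫ x, lamβ ^ n * lambdaN p H β n x ∂ν ≤ (∫ x, hβf x ∂ν) / c :=
  integral_lambdaN_bounded_general p hp_pos H hH_pos β lamβ hlam hβf hβf_cont c hc hβf_lb hβf_eig ν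
    hν
end

section
/- Let Σ⁺ = {0,1}^ℕ with shift T, γ > 1, and let g : Σ⁺ → ℝ take the value a_k = -γ log((k+1)/k) on M_k = [1^k 0] for k ≥ 1, a_0 = -log ζ(γ) on M_0 = [0], and g(111...) = 0. If ν is a Borel probability with ℒ_g^* ν = ν (where ℒ_g(ψ)(y) = ∑_{T(x)=y} e^{g(x)} ψ(x)) and ν({(111...)}) = 0, then ν(M_k) = (k+1)^{-γ}/ζ(γ) for all k ≥ 0. -/
open MeasureTheory Finset

/-- The shift space `Σ⁺ = {0,1}^ℕ`. -/
abbrev SigmaPlus := ℕ → Fin 2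

/-- The left shift on `Σ⁺`. -/
def shift2 (x : SigmaPlus) : SigmaPlus := fun n => x (n + 1)

/-- Prepending a symbol. -/
def cons2 (i : Fin 2) (x : SigmaPlus) : SigmaPlus := fun n => Nat.casesOn n i x

/-- The cylinder `M_k = [1^k 0]`: `k` ones followed by a zero. -/
def Mcyl (k : ℕ) : Set SigmaPlus := {x | (∀ i < k, x i = 1) ∧ x k = 0}

/-- The fixed point `(111…)`. -/
def onesPt : SigmaPlus := fun _ => 1

/-- The Ruelle operator `ℒ_g ψ (y) = ∑_{T x = y} e^{g x} ψ x`. -/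
noncomputable def ruelleG (g : SigmaPlus → ℝ) (ψ : SigmaPlus → ℝ) : SigmaPlus → ℝ :=
  fun y => ∑ i : Fin 2, Real.exp (g (cons2 i y)) * ψ (cons2 i y)

/-!
The cylinders are clopen, so their indicators are admissible test functions in the eigenmeasure
relation `∫ ℒ_g ψ dν = ∫ ψ dν`. Since `T` maps `M_{k+1}` bijectively onto `M_k` and `g` is constant
on each cylinder, `ℒ_g 1_{M_{k+1}} = e^{a_{k+1}} 1_{M_k}` and `ℒ_g 1_{M_0} = e^{a_0}`. Hence
`ν(M_0) = e^{a_0} = 1/ζ(γ)` and `ν(M_{k+1}) = ((k+2)/(k+1))^{-γ} ν(M_k)`, which telescopes.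
-/

lemma isClopen_Mcyl (k : ℕ) : IsClopen (Mcyl k) := by
  have : Mcyl k = (⋂ i ∈ range k, {x : SigmaPlus | x i = 1}) ∩ {x | x k = 0} := by
    ext x; simp [Mcyl]
  rw [this]
  refine (isClopen_biInter_finset fun i _ => ?_).inter ?_
  · exact (isClopen_discrete {1}).preimage (continuous_apply i)
  · exact (isClopen_discrete {0}).preimage (continuous_apply k)

lemma cons2_zero_mem_Mcyl_zero (y : SigmaPlus) : cons2 0 y ∈ Mcyl 0 :=
  ⟨fun _ h => absurd h (Nat.not_lt_zero _), rfl⟩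

lemma cons2_one_notMem_Mcyl_zero (y : SigmaPlus) : cons2 1 y ∉ Mcyl 0 :=
  fun h => one_ne_zero (h.2 : (1 : Fin 2) = 0)

lemma cons2_zero_notMem_Mcyl_succ (k : ℕ) (y : SigmaPlus) : cons2 0 y ∉ Mcyl (k + 1) :=
  fun h => zero_ne_one (h.1 0 k.succ_pos : (0 : Fin 2) = 1)

lemma cons2_one_mem_Mcyl_succ_iff (k : ℕ) (y : SigmaPlus) :
    cons2 1 y ∈ Mcyl (k + 1) ↔ y ∈ Mcyl k := by
  refine ⟨fun h => ⟨fun j hj => h.1 (j + 1) (by omega), h.2⟩, fun h => ⟨fun i hi => ?_, h.2⟩⟩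
  match i with
  | 0 => rfl
  | j + 1 => exact h.1 j (by omega)

section Ruelle

variable {g : SigmaPlus → ℝ} {c : ℝ}

lemma ruelleG_indicator_Mcyl_zero (hg : ∀ x ∈ Mcyl 0, g x = c) (y : SigmaPlus) :
    ruelleG g ((Mcyl 0).indicator 1) y = Real.exp c := by
  simp only [ruelleG, Fin.sum_univ_two,
    Set.indicator_of_mem (cons2_zero_mem_Mcyl_zero y),
    Set.indicator_of_notMem (cons2_one_notMem_Mcyl_zero y), hg _ (cons2_zero_mem_Mcyl_zero y)]
  simp

lemma ruelleG_indicator_Mcyl_succ {k : ℕ} (hg : ∀ x ∈ Mcyl (k + 1), g x = c) :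
    ruelleG g ((Mcyl (k + 1)).indicator 1) = (Mcyl k).indicator fun _ => Real.exp c := by
  ext y
  simp only [ruelleG, Fin.sum_univ_two, Set.indicator_of_notMem (cons2_zero_notMem_Mcyl_succ k y),
    mul_zero, zero_add]
  by_cases hy : y ∈ Mcyl k
  · have hmem := (cons2_one_mem_Mcyl_succ_iff k y).mpr hy
    simp [Set.indicator_of_mem hmem, Set.indicator_of_mem hy, hg _ hmem]
  · have hmem : cons2 1 y ∉ Mcyl (k + 1) := mt (cons2_one_mem_Mcyl_succ_iff k y).mp hy
    simp [Set.indicator_of_notMem hmem, Set.indicator_of_notMem hy]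

variable {ν : Measure SigmaPlus}
  (hν : ∀ ψ : SigmaPlus → ℝ, Continuous ψ → ∫ y, ruelleG g ψ y ∂ν = ∫ y, ψ y ∂ν)
include hν

lemma integral_indicator_Mcyl_eigen (k : ℕ) :
    ∫ y, ruelleG g ((Mcyl k).indicator 1) y ∂ν = ν.real (Mcyl k) := by
  rw [hν ((Mcyl k).indicator 1) ((isClopen_Mcyl k).continuous_indicator continuous_const),
    integral_indicator_one (isClopen_Mcyl k).isOpen.measurableSet]

lemma measureReal_Mcyl_zero [IsProbabilityMeasure ν] (hg : ∀ x ∈ Mcyl 0, g x = c) :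
    ν.real (Mcyl 0) = Real.exp c := by
  rw [← integral_indicator_Mcyl_eigen hν, funext (ruelleG_indicator_Mcyl_zero hg)]
  simp

lemma measureReal_Mcyl_succ {k : ℕ} (hg : ∀ x ∈ Mcyl (k + 1), g x = c) :
    ν.real (Mcyl (k + 1)) = Real.exp c * ν.real (Mcyl k) := by
  rw [← integral_indicator_Mcyl_eigen hν, ruelleG_indicator_Mcyl_succ hg,
    integral_indicator_const _ (isClopen_Mcyl k).isOpen.measurableSet, smul_eq_mul, mul_comm]

end Ruelle

lemma one_le_tsum_nat_add_one_rpow_neg {γ : ℝ} (hγ : 1 < γ) :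
    1 ≤ ∑' n : ℕ, ((n : ℝ) + 1) ^ (-γ) := by
  have hsum : Summable fun n : ℕ => ((n : ℝ) + 1) ^ (-γ) := by
    have := (summable_nat_add_iff 1).mpr (Real.summable_nat_rpow.mpr (by linarith : -γ < -1))
    simpa using this
  simpa using hsum.le_tsum 0 fun i _ => Real.rpow_nonneg (by positivity) _

lemma exp_neg_mul_log_div_mul_rpow {a b : ℝ} (ha : 0 < a) (hb : 0 < b) (γ : ℝ) :
    Real.exp (-γ * Real.log (a / b)) * b ^ (-γ) = a ^ (-γ) := by
  rw [Real.rpow_def_of_pos ha, Real.rpow_def_of_pos hb, ← Real.exp_add,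
    Real.log_div ha.ne' hb.ne']
  ring_nf

theorem eigenmeasure_masses_general (γ : ℝ) (hγ : 1 < γ)
    (Z : ℝ) (hZ : Z = ∑' n : ℕ, ((n : ℝ) + 1) ^ (-γ))
    (g : SigmaPlus → ℝ)
    (hg0 : ∀ x ∈ Mcyl 0, g x = -Real.log Z)
    (hgk : ∀ k : ℕ, 1 ≤ k → ∀ x ∈ Mcyl k, g x = -γ * Real.log (((k : ℝ) + 1) / k))
    (ν : Measure SigmaPlus) [IsProbabilityMeasure ν]
    (hν : ∀ ψ : SigmaPlus → ℝ, Continuous ψ →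
      ∫ y, ruelleG g ψ y ∂ν = ∫ y, ψ y ∂ν) :
    ∀ k : ℕ, ν (Mcyl k) = ENNReal.ofReal (((k : ℝ) + 1) ^ (-γ) / Z) := by
  have hZ_pos : 0 < Z := hZ ▸ one_pos.trans_le (one_le_tsum_nat_add_one_rpow_neg hγ)
  intro k
  rw [← ofReal_measureReal]
  congr 1
  induction k with
  | zero =>
    rw [measureReal_Mcyl_zero hν hg0, Real.exp_neg, Real.exp_log hZ_pos]
    simp
  | succ m ih =>
    rw [measureReal_Mcyl_succ hν (hgk (m + 1) m.succ_pos), ih, ← mul_div_assoc]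
    push_cast
    rw [exp_neg_mul_log_div_mul_rpow (by positivity) (by positivity)]

theorem eigenmeasure_masses (γ : ℝ) (hγ : 1 < γ)
    (Z : ℝ) (hZ : Z = ∑' n : ℕ, ((n : ℝ) + 1) ^ (-γ))
    (g : SigmaPlus → ℝ)
    (hg0 : ∀ x ∈ Mcyl 0, g x = -Real.log Z)
    (hgk : ∀ k : ℕ, 1 ≤ k → ∀ x ∈ Mcyl k, g x = -γ * Real.log (((k : ℝ) + 1) / k))
    (hgfix : g onesPt = 0)
    (ν : Measure SigmaPlus) [IsProbabilityMeasure ν]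
    (hν : ∀ ψ : SigmaPlus → ℝ, Continuous ψ →
      ∫ y, ruelleG g ψ y ∂ν = ∫ y, ψ y ∂ν)
    (hfix : ν {onesPt} = 0) :
    ∀ k : ℕ, ν (Mcyl k) = ENNReal.ofReal (((k : ℝ) + 1) ^ (-γ) / Z) :=
  eigenmeasure_masses_general γ hγ Z hZ g hg0 hgk ν hν
end
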